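/- arXiv:2412.10370 — 4 statements merged into one kernel-verified Lean document; each statement's English description precedes it below -/
import Mathlib

section
/- Let Σ be a finite alphabet, let P_1, …, P_k and Q_1, …, Q_k be n-dimensional product distributions over Σ with factor distributions p_{i,t} and q_{i,t} respectively, and let w_1, …, w_k, v_1, …, v_k be real weights. Fix 1 ≤ j < n, and for x ∈ Σ^j define u_j(x) ∈ ℝ^{2k} by u_j(x)_i = w_i P_i^{≤j}(x) and u_j(x)_{k+i} = −v_i Q_i^{≤j}(x) for 1 ≤ i ≤ k. Suppose b_1, …, b_m ∈ ℝ^{2k} are vectors whose span contains {u_j(x) : x ∈ Σ^j}. Define, for each 1 ≤ ℓ ≤ m and y ∈ Σ, the vector c_ℓ(y) ∈ ℝ^{2k} by c_ℓ(y)_i = b_{ℓ,i} · p_{i,j+1}(y) and c_ℓ(y)_{k+i} = b_{ℓ,k+i} · q_{i,j+1}(y) for 1 ≤ i ≤ k. Then the span of {c_ℓ(y) : 1 ≤ ℓ ≤ m, y ∈ Σ} contains {u_{j+1}(x,y) : x ∈ Σ^j, y ∈ Σ}. -/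
/-!
Appending `y` to `x` multiplies each coordinate of `u_j(x)` by `p_{i,j+1}(y)` or `q_{i,j+1}(y)`,
and `c_ℓ(y)` is `b_ℓ` multiplied coordinatewise by the same vector. Coordinatewise multiplication
is linear, so it carries `span {b_ℓ}` into `span {c_ℓ(y)}`.
-/

open Finset

/-- The coefficient vector `u_j(x) ∈ ℝ^{2k}` associated with weighted product
distributions: coordinate `i ≤ k` is `w_i P_i^{≤j}(x)` and coordinate `k+i` is
`−v_i Q_i^{≤j}(x)`, where `P_i^{≤j}(x) = ∏_{t=1}^j p_{i,t}(x_t)`. -/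
noncomputable def uVec {A : Type*} {k n : ℕ}
    (p q : Fin k → Fin n → A → ℝ) (w v : Fin k → ℝ)
    (j : ℕ) (hjn : j ≤ n) (x : Fin j → A) : (Fin k ⊕ Fin k) → ℝ :=
  Sum.elim (fun i => w i * ∏ t : Fin j, p i (Fin.castLE hjn t) (x t))
           (fun i => -(v i * ∏ t : Fin j, q i (Fin.castLE hjn t) (x t)))

/-- The vector `c_ℓ(y) ∈ ℝ^{2k}` obtained from a vector `b ∈ ℝ^{2k}` by multiplying
coordinate `i` by `p_{i,j+1}(y)` and coordinate `k+i` by `q_{i,j+1}(y)`. -/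
noncomputable def cVec {A : Type*} {k n : ℕ}
    (p q : Fin k → Fin n → A → ℝ) {j : ℕ} (hjn : j + 1 ≤ n)
    (b : (Fin k ⊕ Fin k) → ℝ) (y : A) : (Fin k ⊕ Fin k) → ℝ :=
  Sum.elim (fun i => b (Sum.inl i) * p i (Fin.castLE hjn (Fin.last j)) y)
           (fun i => b (Sum.inr i) * q i (Fin.castLE hjn (Fin.last j)) y)

theorem Submodule.mul_right_mem_span_range {K R ι : Type*} [CommSemiring K] [Semiring R]
    [Algebra K R] {b : ι → R} {u : R} (hu : u ∈ Submodule.span K (Set.range b)) (g : R) :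
    u * g ∈ Submodule.span K (Set.range fun ℓ => b ℓ * g) := by
  have h := Submodule.mem_map_of_mem (f := LinearMap.mulRight K g) hu
  rwa [Submodule.map_span, ← Set.range_comp] at h

section ProductWeights

variable {A : Type*} {k n : ℕ} (p q : Fin k → Fin n → A → ℝ)

noncomputable def lastFactor {j : ℕ} (hjn : j + 1 ≤ n) (y : A) : (Fin k ⊕ Fin k) → ℝ :=
  Sum.elim (fun i => p i (Fin.castLE hjn (Fin.last j)) y)
           (fun i => q i (Fin.castLE hjn (Fin.last j)) y)

theorem cVec_eq_mul_lastFactor {j : ℕ} (hjn : j + 1 ≤ n) (b : (Fin k ⊕ Fin k) → ℝ) (y : A) :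
    cVec p q hjn b y = b * lastFactor p q hjn y := by
  funext s
  cases s <;> rfl

theorem prod_castLE_snoc {M : Type*} [CommMonoid M] {j : ℕ} (hjn : j + 1 ≤ n)
    (r : Fin n → A → M) (x : Fin j → A) (y : A) :
    ∏ t : Fin (j + 1), r (Fin.castLE hjn t) (Fin.snoc (α := fun _ => A) x y t)
      = (∏ t : Fin j, r (Fin.castLE (Nat.le_of_succ_le hjn) t) (x t))
          * r (Fin.castLE hjn (Fin.last j)) y := by
  simp only [Fin.prod_univ_castSucc, Fin.snoc_castSucc, Fin.snoc_last]
  rfl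

theorem uVec_snoc {j : ℕ} (w v : Fin k → ℝ) (hjn : j + 1 ≤ n) (x : Fin j → A) (y : A) :
    uVec p q w v (j + 1) hjn (Fin.snoc x y)
      = uVec p q w v j (Nat.le_of_succ_le hjn) x * lastFactor p q hjn y := by
  funext s
  cases s with
  | inl i => simp only [uVec, lastFactor, Pi.mul_apply, Sum.elim_inl, prod_castLE_snoc, mul_assoc]
  | inr i =>
    simp only [uVec, lastFactor, Pi.mul_apply, Sum.elim_inr, prod_castLE_snoc, mul_assoc, neg_mul]

end ProductWeights

/-- if the span of `b_1, …, b_m` contains all the vectors `u_j(x)`,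
then the span of the vectors `c_ℓ(y)` (for `1 ≤ ℓ ≤ m`, `y ∈ Σ`) contains all the
vectors `u_{j+1}(x,y)`. -/
theorem uVec_snoc_mem_span_cVec
    (A : Type*) (k n : ℕ)
    (p q : Fin k → Fin n → A → ℝ) (w v : Fin k → ℝ)
    (j : ℕ) (hjn : j + 1 ≤ n)
    (m : ℕ) (b : Fin m → (Fin k ⊕ Fin k) → ℝ)
    (hspan : ∀ x : Fin j → A,
      uVec p q w v j (by omega) x ∈ Submodule.span ℝ (Set.range b)) :
    ∀ (x : Fin j → A) (y : A),
      uVec p q w v (j + 1) hjn (Fin.snoc x y)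
        ∈ Submodule.span ℝ
            (Set.range (fun ℓy : Fin m × A => cVec p q hjn (b ℓy.1) ℓy.2)) := by
  intro x y
  rw [uVec_snoc]
  refine Submodule.span_mono ?_ (Submodule.mul_right_mem_span_range (hspan x) _)
  rintro _ ⟨ℓ, rfl⟩
  exact ⟨(ℓ, y), cVec_eq_mul_lastFactor p q hjn (b ℓ) y⟩
end

section
/- Let P be an Ising model on variables x_0, x_1, …, x_n with parameters w_{i,j} (0 ≤ i < j ≤ n) and h_i (0 ≤ i ≤ n). Fix 1 ≤ k ≤ n and δ > 0, and let Q be the Ising model with the same parameters except w'_{0,k} = w_{0,k} + δ. Then the total variation distance between P and Q satisfies dTV(P, Q) = Σ_{x ∈ {−1,1}^{n+1} : x_0 x_k = −1} (P(x) − Q(x)). -/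
open Finset

/-- The spin value (`+1` or `−1`) encoded by a Boolean. -/
noncomputable def spin (b : Bool) : ℝ := if b then 1 else -1

/-- The (unnormalized) weight of a configuration `x ∈ {−1,1}^N` of the Ising model with
pair parameters `w i j` (used for `i < j`) and field parameters `h i`:
`E(x) = exp(Σ_{i<j} w_{i,j} x_i x_j + Σ_i h_i x_i)`. -/
noncomputable def isingWeight {N : ℕ} (w : Fin N → Fin N → ℝ) (h : Fin N → ℝ)
    (x : Fin N → Bool) : ℝ :=
  Real.exp ((∑ i, ∑ j ∈ Finset.Ioi i, w i j * spin (x i) * spin (x j)) +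
    ∑ i, h i * spin (x i))

/-- The partition function `Z = Σ_x E(x)` of the Ising model. -/
noncomputable def isingZ {N : ℕ} (w : Fin N → Fin N → ℝ) (h : Fin N → ℝ) : ℝ :=
  ∑ x : Fin N → Bool, isingWeight w h x

/-- The probability `P(x) = E(x)/Z` of a configuration of the Ising model. -/
noncomputable def isingProb {N : ℕ} (w : Fin N → Fin N → ℝ) (h : Fin N → ℝ)
    (x : Fin N → Bool) : ℝ :=
  isingWeight w h x / isingZ w h

/-!
Increasing `w_{0,k}` by `δ` multiplies the weight of `x` by `exp (δ x₀ x_k)`, so `Q` is the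
exponential tilt of `P` by the `±1`-valued statistic `s = x₀ x_k`:
`Q(x) = P(x) e^{δ s(x)} / E_P[e^{δ s}]`. The normalizer lies in `[e^{-δ}, e^{δ}]`, hence
`Q ≤ P` where `s = -1` and `Q ≥ P` where `s = 1`, so the positive part of `P - Q` is
carried exactly by `{s = -1}`.
-/

open Real

lemma spin_mul_spin_eq_one_or_neg_one (a b : Bool) :
    spin a * spin b = 1 ∨ spin a * spin b = -1 := by
  cases a <;> cases b <;> simp [spin]

lemma sum_max_zero_eq_sum_filter {α : Type*} [Fintype α] (f : α → ℝ) (p : α → Prop)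
    [DecidablePred p] (hpos : ∀ x, p x → 0 ≤ f x) (hneg : ∀ x, ¬ p x → f x ≤ 0) :
    ∑ x, max 0 (f x) = ∑ x ∈ univ.filter p, f x := by
  rw [sum_filter]
  refine sum_congr rfl fun x _ => ?_
  split_ifs with hx
  · exact max_eq_right (hpos x hx)
  · exact max_eq_left (hneg x hx)

section Tilt

variable {α : Type*} [Fintype α] {W s : α → ℝ} {δ : ℝ}

lemma sum_mul_exp_le (hW : ∀ x, 0 ≤ W x) (hs : ∀ x, s x ≤ 1) (hδ : 0 ≤ δ) :
    ∑ x, W x * exp (δ * s x) ≤ exp δ * ∑ x, W x := by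
  rw [mul_sum]
  refine sum_le_sum fun x _ => ?_
  rw [mul_comm (exp δ)]
  gcongr
  · exact hW x
  · nlinarith [hs x]

lemma exp_neg_mul_sum_le (hW : ∀ x, 0 ≤ W x) (hs : ∀ x, -1 ≤ s x) (hδ : 0 ≤ δ) :
    exp (-δ) * ∑ x, W x ≤ ∑ x, W x * exp (δ * s x) := by
  rw [mul_sum]
  refine sum_le_sum fun x _ => ?_
  rw [mul_comm (exp (-δ))]
  gcongr
  · exact hW x
  · nlinarith [hs x]

lemma tilt_le_of_eq_neg_one (hW : ∀ x, 0 < W x) (hs : ∀ x, -1 ≤ s x) (hδ : 0 ≤ δ)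
    {x : α} (hx : s x = -1) :
    W x * exp (δ * s x) / ∑ y, W y * exp (δ * s y) ≤ W x / ∑ y, W y := by
  have hZ : 0 < ∑ y, W y := sum_pos (fun y _ => hW y) ⟨x, mem_univ x⟩
  have hZ' : 0 < ∑ y, W y * exp (δ * s y) :=
    sum_pos (fun y _ => mul_pos (hW y) (exp_pos _)) ⟨x, mem_univ x⟩
  rw [div_le_div_iff₀ hZ' hZ, hx, mul_neg_one, mul_assoc]
  exact mul_le_mul_of_nonneg_left (exp_neg_mul_sum_le (fun y => (hW y).le) hs hδ) (hW x).le

lemma le_tilt_of_eq_one (hW : ∀ x, 0 < W x) (hs : ∀ x, s x ≤ 1) (hδ : 0 ≤ δ)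
    {x : α} (hx : s x = 1) :
    W x / ∑ y, W y ≤ W x * exp (δ * s x) / ∑ y, W y * exp (δ * s y) := by
  have hZ : 0 < ∑ y, W y := sum_pos (fun y _ => hW y) ⟨x, mem_univ x⟩
  have hZ' : 0 < ∑ y, W y * exp (δ * s y) :=
    sum_pos (fun y _ => mul_pos (hW y) (exp_pos _)) ⟨x, mem_univ x⟩
  rw [div_le_div_iff₀ hZ hZ', hx, mul_one, mul_assoc]
  exact mul_le_mul_of_nonneg_left (sum_mul_exp_le (fun y => (hW y).le) hs hδ) (hW x).le

lemma sum_max_zero_sub_tilt_eq_sum_filter (hW : ∀ x, 0 < W x)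
    (hs : ∀ x, s x = 1 ∨ s x = -1) (hδ : 0 ≤ δ) :
    ∑ x, max 0 (W x / ∑ y, W y - W x * exp (δ * s x) / ∑ y, W y * exp (δ * s y)) =
      ∑ x ∈ univ.filter (fun x => s x = -1),
        (W x / ∑ y, W y - W x * exp (δ * s x) / ∑ y, W y * exp (δ * s y)) := by
  have hs_le : ∀ x, s x ≤ 1 := fun x => by rcases hs x with h | h <;> linarith
  have hs_ge : ∀ x, -1 ≤ s x := fun x => by rcases hs x with h | h <;> linarith
  refine sum_max_zero_eq_sum_filter _ _ (fun x hx => ?_) (fun x hx => ?_)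
  · exact sub_nonneg.mpr (tilt_le_of_eq_neg_one hW hs_ge hδ hx)
  · exact sub_nonpos.mpr (le_tilt_of_eq_one hW hs_le hδ ((hs x).resolve_right hx))

end Tilt

section Ising

variable {N : ℕ} {w w' : Fin N → Fin N → ℝ} {δ : ℝ} {a b : Fin N}

lemma isingWeight_of_add_pair (h : Fin N → ℝ) (hab : a < b)
    (hw' : ∀ i j, w' i j = if i = a ∧ j = b then w i j + δ else w i j) (x : Fin N → Bool) :
    isingWeight w' h x = isingWeight w h x * exp (δ * (spin (x a) * spin (x b))) := by
  have hpair : (∑ i, ∑ j ∈ Ioi i, w' i j * spin (x i) * spin (x j)) =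
      (∑ i, ∑ j ∈ Ioi i, w i j * spin (x i) * spin (x j)) + δ * (spin (x a) * spin (x b)) := by
    have hterm : ∀ i j, w' i j * spin (x i) * spin (x j) = w i j * spin (x i) * spin (x j) +
        if i = a then if j = b then δ * (spin (x a) * spin (x b)) else 0 else 0 := by
      intro i j
      rw [hw']
      by_cases hi : i = a <;> by_cases hj : j = b <;> simp [hi, hj]
      ring
    simp_rw [hterm, sum_add_distrib, sum_ite_irrel, sum_ite_eq', mem_Ioi, sum_const_zero,
      sum_ite_eq', mem_univ, if_pos hab, if_true]
  rw [isingWeight, isingWeight, ← exp_add, hpair]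
  congr 1
  ring

end Ising

open scoped Classical

/-- with `Q` obtained from the Ising model `P` by replacing `w_{0,k}` with
`w_{0,k} + δ` (`δ > 0`), the total variation distance `Σ_x max(0, P(x) − Q(x))` equals
`Σ_{x : x_0 x_k = −1} (P(x) − Q(x))`. -/
theorem ising_tv_eq_sum_on_disagreement
    (n : ℕ) (w : Fin (n + 1) → Fin (n + 1) → ℝ) (h : Fin (n + 1) → ℝ)
    (k : Fin (n + 1)) (hk : k ≠ 0) (δ : ℝ) (hδ : 0 < δ)
    (w' : Fin (n + 1) → Fin (n + 1) → ℝ)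
    (hw' : ∀ i j, w' i j = if i = 0 ∧ j = k then w i j + δ else w i j) :
    (∑ x : Fin (n + 1) → Bool, max 0 (isingProb w h x - isingProb w' h x))
    = ∑ x ∈ Finset.univ.filter
          (fun x : Fin (n + 1) → Bool => spin (x 0) * spin (x k) = -1),
        (isingProb w h x - isingProb w' h x) := by
  have hW := isingWeight_of_add_pair h (Fin.pos_of_ne_zero hk) hw'
  simp only [isingProb, isingZ, hW]
  exact sum_max_zero_sub_tilt_eq_sum_filter (fun x => exp_pos _)
    (fun x => spin_mul_spin_eq_one_or_neg_one _ _) hδ.le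
end

section
/- Let P be an Ising model on variables x_0, x_1, …, x_n with parameters w_{i,j} (0 ≤ i < j ≤ n) and h_i (0 ≤ i ≤ n), and suppose w_{0,i} = 0 for all 1 ≤ i ≤ n. Then for every 1 ≤ k ≤ n, Σ_{x ∈ {−1,1}^{n+1} : x_0 x_k = −1} P(x) = exp(2 h_0)/(exp(2 h_0) + 1) + ((1 − exp(2 h_0))/(exp(2 h_0) + 1)) · Pr_P[x_k = 1]. -/
open Finset

open scoped Classical

lemma sum_cons_bool {n : ℕ} (f : (Fin (n+1) → Bool) → ℝ) :
    ∑ x : Fin (n+1) → Bool, f x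
      = ∑ b : Bool, ∑ y : Fin n → Bool, f (Fin.cons b y) := by
  rw [← (Fin.consEquiv (fun _ : Fin (n+1) => Bool)).sum_comp f, Fintype.sum_prod_type]
  rfl

lemma weight_cons {n : ℕ} (w : Fin (n + 1) → Fin (n + 1) → ℝ) (h : Fin (n + 1) → ℝ)
    (hw0 : ∀ i : Fin (n + 1), i ≠ 0 → w 0 i = 0) (b : Bool) (y : Fin n → Bool) :
    isingWeight w h (Fin.cons b y)
      = Real.exp (h 0 * spin b) *
        Real.exp ((∑ i : Fin n, ∑ j ∈ Finset.Ioi i,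
            w i.succ j.succ * spin (y i) * spin (y j)) +
          ∑ i : Fin n, h i.succ * spin (y i)) := by
  rw [isingWeight, ← Real.exp_add]
  congr 1
  rw [Fin.sum_univ_succ, Fin.sum_univ_succ]
  simp only [Fin.sum_Ioi_succ, Fin.sum_Ioi_zero, Fin.cons_succ, Fin.cons_zero]
  rw [show (∑ j : Fin n, w 0 j.succ * spin b * spin (y j)) = 0 from
    Finset.sum_eq_zero fun j _ => by rw [hw0 j.succ (Fin.succ_ne_zero j)]; ring]
  ring

lemma spin_mul_eq_neg_one (b c : Bool) : spin b * spin c = -1 ↔ b ≠ c := by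
  cases b <;> cases c <;> simp [spin] <;> norm_num

lemma spin_eq_one (b : Bool) : spin b = 1 ↔ b = true := by
  cases b <;> simp [spin] <;> norm_num

/-- in an Ising model on `x_0, …, x_n` with `w_{0,i} = 0` for `i ≥ 1`,
for every `1 ≤ k ≤ n`:
`Pr[x_0 x_k = −1] = exp(2h_0)/(exp(2h_0)+1) + ((1 − exp(2h_0))/(exp(2h_0)+1)) · Pr[x_k = 1]`. -/
theorem ising_disagreement_mass
    (n : ℕ) (w : Fin (n + 1) → Fin (n + 1) → ℝ) (h : Fin (n + 1) → ℝ)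
    (hw0 : ∀ i : Fin (n + 1), i ≠ 0 → w 0 i = 0)
    (k : Fin (n + 1)) (hk : k ≠ 0) :
    (∑ x ∈ Finset.univ.filter
        (fun x : Fin (n + 1) → Bool => spin (x 0) * spin (x k) = -1),
      isingProb w h x)
    = Real.exp (2 * h 0) / (Real.exp (2 * h 0) + 1) +
      ((1 - Real.exp (2 * h 0)) / (Real.exp (2 * h 0) + 1)) *
        ∑ x ∈ Finset.univ.filter (fun x : Fin (n + 1) → Bool => spin (x k) = 1),
          isingProb w h x := by
  set G : (Fin n → Bool) → ℝ := fun y =>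
    Real.exp ((∑ i : Fin n, ∑ j ∈ Finset.Ioi i,
        w i.succ j.succ * spin (y i) * spin (y j)) +
      ∑ i : Fin n, h i.succ * spin (y i)) with hG
  set k' : Fin n := k.pred hk with hk'
  have hks : k'.succ = k := Fin.succ_pred k hk
  set P0 : ℝ := Real.exp (h 0) with hP0
  set P1 : ℝ := Real.exp (-(h 0)) with hP1def
  set Z' : ℝ := ∑ y : Fin n → Bool, G y with hZ'
  set A : ℝ := ∑ y ∈ Finset.univ.filter (fun y : Fin n → Bool => y k' = true), G y
    with hA
  have hGpos : ∀ y, 0 < G y := fun y => Real.exp_pos _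
  have hZ'pos : 0 < Z' := Finset.sum_pos (fun y _ => hGpos y) ⟨fun _ => true, by simp⟩
  have hsplit : A + ∑ y ∈ Finset.univ.filter (fun y : Fin n → Bool => y k' = false),
      G y = Z' := by
    rw [hA, hZ']
    rw [← Finset.sum_filter_add_sum_filter_not Finset.univ
      (fun y : Fin n → Bool => y k' = true) G]
    congr 1
    apply Finset.sum_congr _ (fun _ _ => rfl)
    ext y
    simp
  have hBval : ∑ y ∈ Finset.univ.filter (fun y : Fin n → Bool => y k' = false), G y
      = Z' - A := by linarith
  -- weight under cons
  have hwc : ∀ (b : Bool) (y : Fin n → Bool),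
      isingWeight w h (Fin.cons b y) = Real.exp (h 0 * spin b) * G y :=
    fun b y => weight_cons w h hw0 b y
  have hconsk : ∀ (b : Bool) (y : Fin n → Bool),
      (Fin.cons b y : Fin (n+1) → Bool) k = y k' := by
    intro b y
    rw [← hks, Fin.cons_succ]
  -- partition function
  have hZ : isingZ w h = (P0 + P1) * Z' := by
    rw [isingZ, sum_cons_bool]
    simp only [hwc, ← Finset.mul_sum, Fintype.sum_bool, spin]
    rw [hZ']
    norm_num [hP0, hP1def]
    ring
  -- numerator of LHS
  have hN : ∑ x ∈ Finset.univ.filter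
        (fun x : Fin (n + 1) → Bool => spin (x 0) * spin (x k) = -1),
      isingWeight w h x = P0 * (Z' - A) + P1 * A := by
    rw [Finset.sum_filter, sum_cons_bool]
    simp only [Fin.cons_zero, hconsk, hwc, Fintype.sum_bool, spin_mul_eq_neg_one]
    have c1 : ∀ x : Fin n → Bool, (true ≠ x k') ↔ (x k' = false) := by
      intro x; cases hx : x k' <;> simp [hx]
    have c2 : ∀ x : Fin n → Bool, (false ≠ x k') ↔ (x k' = true) := by
      intro x; cases hx : x k' <;> simp [hx]
    simp only [c1, c2, show spin true = 1 from by simp [spin],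
      show spin false = -1 from by simp [spin], mul_one, mul_neg_one,
      ← hP0, ← hP1def]
    rw [← Finset.sum_filter, ← Finset.sum_filter, ← Finset.mul_sum, ← Finset.mul_sum,
      Finset.filter_congr (fun x _ => c1 x), Finset.filter_congr (fun x _ => c2 x), hBval, ← hA]
  -- numerator of RHS probability
  have hM : ∑ x ∈ Finset.univ.filter
        (fun x : Fin (n + 1) → Bool => spin (x k) = 1),
      isingWeight w h x = (P0 + P1) * A := by
    rw [Finset.sum_filter, sum_cons_bool]
    simp only [hconsk, hwc, Fintype.sum_bool, spin_eq_one,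
      show spin true = 1 from by simp [spin],
      show spin false = -1 from by simp [spin], mul_one, mul_neg_one,
      ← hP0, ← hP1def]
    rw [← Finset.sum_filter, ← Finset.sum_filter, ← Finset.mul_sum, ← Finset.mul_sum,
      ← hA]
    ring
  have hE : Real.exp (2 * h 0) = P0 ^ 2 := by
    rw [two_mul, Real.exp_add, hP0, sq]
  have hinv : P1 = P0⁻¹ := by rw [hP1def, Real.exp_neg, hP0]
  have hP0pos : (0 : ℝ) < P0 := Real.exp_pos _
  have hd1 : P0 ^ 2 + 1 ≠ 0 := by positivity
  simp only [isingProb]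
  rw [← Finset.sum_div, ← Finset.sum_div, hN, hM, hZ, hE, hinv]
  have h2 : P0 + P0⁻¹ ≠ 0 := by positivity
  field_simp
  ring
end

section
/- Let P be an Ising model on variables x_0, x_1, …, x_n with partition function Z_P. Fix 1 ≤ k ≤ n and δ > 0, and let Q be the Ising model with the same parameters except w'_{0,k} = w_{0,k} + δ, with partition function Z_Q. Then 0 ≤ Σ_{x ∈ {−1,1}^{n+1} : x_0 x_k = −1} Q(x) ≤ exp(−δ) · Z_P / Z_Q. -/
open Finset

open scoped Classical

/-! Raising the coupling of one edge `i < j` by `δ` multiplies the weight of `x` by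
`exp (δ xᵢ xⱼ)`; on configurations with `xᵢ xⱼ = -1` this factor is `exp (-δ)`, and
dropping the remaining configurations from `Z_Q` only decreases it. -/

section Ising

variable {N : ℕ} (w : Fin N → Fin N → ℝ) (h : Fin N → ℝ)

theorem isingWeight_pos (x : Fin N → Bool) : 0 < isingWeight w h x :=
  Real.exp_pos _

theorem isingZ_pos : 0 < isingZ w h :=
  Finset.sum_pos (fun x _ => isingWeight_pos w h x) Finset.univ_nonempty

theorem sum_isingWeight_le_isingZ (s : Finset (Fin N → Bool)) :
    ∑ x ∈ s, isingWeight w h x ≤ isingZ w h :=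
  Finset.sum_le_univ_sum_of_nonneg fun x => (isingWeight_pos w h x).le

theorem sum_isingProb (s : Finset (Fin N → Bool)) :
    ∑ x ∈ s, isingProb w h x = (∑ x ∈ s, isingWeight w h x) / isingZ w h :=
  (Finset.sum_div _ _ _).symm

variable {w}

theorem sum_pairEnergy_of_tilt {w' : Fin N → Fin N → ℝ} {i j : Fin N} (hij : i < j) {δ : ℝ}
    (hw' : ∀ a b, w' a b = if a = i ∧ b = j then w a b + δ else w a b) (s : Fin N → ℝ) :
    ∑ a, ∑ b ∈ Finset.Ioi a, w' a b * s a * s b =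
      δ * s i * s j + ∑ a, ∑ b ∈ Finset.Ioi a, w a b * s a * s b := by
  have hsplit : ∀ a b, w' a b * s a * s b =
      (if a = i then if b = j then δ * s i * s j else 0 else 0) + w a b * s a * s b := by
    intro a b
    rw [hw']
    by_cases ha : a = i <;> by_cases hb : b = j <;> simp [ha, hb, add_mul, add_comm]
  simp only [hsplit, Finset.sum_add_distrib]
  congr 1
  rw [Finset.sum_eq_single i (fun a _ ha => by simp [ha]) (by simp)]
  simp [hij]

theorem isingWeight_of_tilt {w' : Fin N → Fin N → ℝ} {i j : Fin N} (hij : i < j) {δ : ℝ}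
    (hw' : ∀ a b, w' a b = if a = i ∧ b = j then w a b + δ else w a b) (x : Fin N → Bool) :
    isingWeight w' h x = Real.exp (δ * spin (x i) * spin (x j)) * isingWeight w h x := by
  rw [isingWeight, isingWeight, sum_pairEnergy_of_tilt hij hw', ← Real.exp_add, add_assoc]

end Ising

theorem ising_tilted_disagreement_mass_bound_general
    (n : ℕ) (w : Fin (n + 1) → Fin (n + 1) → ℝ) (h : Fin (n + 1) → ℝ)
    (k : Fin (n + 1)) (hk : k ≠ 0) (δ : ℝ)
    (w' : Fin (n + 1) → Fin (n + 1) → ℝ)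
    (hw' : ∀ i j, w' i j = if i = 0 ∧ j = k then w i j + δ else w i j) :
    0 ≤ (∑ x ∈ Finset.univ.filter
            (fun x : Fin (n + 1) → Bool => spin (x 0) * spin (x k) = -1),
          isingProb w' h x) ∧
    (∑ x ∈ Finset.univ.filter
        (fun x : Fin (n + 1) → Bool => spin (x 0) * spin (x k) = -1),
      isingProb w' h x)
      ≤ Real.exp (-δ) * isingZ w h / isingZ w' h := by
  set S := Finset.univ.filter
    (fun x : Fin (n + 1) → Bool => spin (x 0) * spin (x k) = -1)
  have htilt : ∀ x ∈ S, isingWeight w' h x = Real.exp (-δ) * isingWeight w h x := by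
    intro x hx
    rw [isingWeight_of_tilt h (Fin.pos_of_ne_zero hk) hw', mul_assoc,
      (Finset.mem_filter.mp hx).2, mul_neg_one]
  rw [sum_isingProb, Finset.sum_congr rfl htilt, ← Finset.mul_sum]
  refine ⟨div_nonneg (mul_nonneg (Real.exp_pos _).le
    (Finset.sum_nonneg fun x _ => (isingWeight_pos w h x).le)) (isingZ_pos w' h).le, ?_⟩
  gcongr
  · exact (isingZ_pos w' h).le
  · exact sum_isingWeight_le_isingZ w h S

/-- with `Q` obtained from the Ising model `P` (on `x_0, …, x_n`) by
replacing `w_{0,k}` with `w_{0,k} + δ` (`δ > 0`), we have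
`0 ≤ Σ_{x : x_0 x_k = −1} Q(x) ≤ exp(−δ) · Z_P / Z_Q`. -/
theorem ising_tilted_disagreement_mass_bound
    (n : ℕ) (w : Fin (n + 1) → Fin (n + 1) → ℝ) (h : Fin (n + 1) → ℝ)
    (k : Fin (n + 1)) (hk : k ≠ 0) (δ : ℝ) (hδ : 0 < δ)
    (w' : Fin (n + 1) → Fin (n + 1) → ℝ)
    (hw' : ∀ i j, w' i j = if i = 0 ∧ j = k then w i j + δ else w i j) :
    0 ≤ (∑ x ∈ Finset.univ.filter
            (fun x : Fin (n + 1) → Bool => spin (x 0) * spin (x k) = -1),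
          isingProb w' h x) ∧
    (∑ x ∈ Finset.univ.filter
        (fun x : Fin (n + 1) → Bool => spin (x 0) * spin (x k) = -1),
      isingProb w' h x)
      ≤ Real.exp (-δ) * isingZ w h / isingZ w' h :=
  ising_tilted_disagreement_mass_bound_general n w h k hk δ w' hw'
end
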